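/- Let (M^{2n+1}, φ, ξ, η, g) be a CR-integrable almost α-Kenmotsu manifold with canonical connection ∇̃ and torsion T̃. Then the following conditions are equivalent: (a) ∇̃T̃ = 0; (b) ∇̃h' = 0; (c) the tensor field h' is η-parallel and ∇_ξ h' = 0. -/

import Mathlib

/- Common framework: a (2n+1)-dimensional manifold is modelled by an open subset `s`
of Euclidean space; tensor fields are given pointwise (evaluated on constant vector
fields), connections are given by their Christoffel symbols, and covariant
derivatives / curvatures are expressed via `fderiv`. -/

noncomputable section

namespace AKG

open scoped RealInnerProductSpace

abbrev E (m : ℕ) : Type := EuclideanSpace ℝ (Fin m)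

variable {V : Type*} [NormedAddCommGroup V] [NormedSpace ℝ V]

/-- A Riemannian metric on `s`, as a pointwise symmetric positive bilinear form. -/
def IsMetricOn (s : Set V) (g : V → V → V → ℝ) : Prop :=
  (∀ u v : V, ContDiffOn ℝ (⊤ : ℕ∞) (fun p => g p u v) s) ∧
  (∀ p ∈ s, ∀ u v : V, g p u v = g p v u) ∧
  (∀ p ∈ s, ∀ v : V, IsLinearMap ℝ (fun u : V => g p u v)) ∧
  (∀ p ∈ s, ∀ u : V, u ≠ 0 → 0 < g p u u)

/-- A linear connection on `s`, via its Christoffel symbols. -/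
def IsConnectionOn (s : Set V) (Γ : V → V → V → V) : Prop :=
  (∀ u v : V, ContDiffOn ℝ (⊤ : ℕ∞) (fun p => Γ p u v) s) ∧
  (∀ p ∈ s, ∀ v : V, IsLinearMap ℝ (fun u : V => Γ p u v)) ∧
  (∀ p ∈ s, ∀ u : V, IsLinearMap ℝ (fun v : V => Γ p u v))

/-- The Levi-Civita connection of `g` on `s`: torsion-free and metric. -/
def IsLeviCivitaOn (s : Set V) (g : V → V → V → ℝ) (Γ : V → V → V → V) : Prop :=
  IsConnectionOn s Γ ∧
  (∀ p ∈ s, ∀ u v : V, Γ p u v = Γ p v u) ∧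
  (∀ p ∈ s, ∀ u v w : V,
    fderiv ℝ (fun q => g q v w) p u = g p (Γ p u v) w + g p v (Γ p u w))

/-- Covariant derivative `∇ᵤ X` of a vector field `X` at `p`. -/
def cov (Γ : V → V → V → V) (X : V → V) (p u : V) : V :=
  fderiv ℝ X p u + Γ p u (X p)

/-- Curvature tensor `R(u,v)w` at `p` (evaluated on constant extensions). -/
def Rm (Γ : V → V → V → V) (p u v w : V) : V :=
  fderiv ℝ (fun q => Γ q v w) p u - fderiv ℝ (fun q => Γ q u w) p v
    + Γ p u (Γ p v w) - Γ p v (Γ p u w)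

/-- Covariant derivative `(∇ᵤ A)(v)` of a (1,1)-tensor field `A`. -/
def covOp (Γ : V → V → V → V) (A : V → V → V) (p u v : V) : V :=
  fderiv ℝ (fun q => A q v) p u + Γ p u (A p v) - A p (Γ p u v)

/-- Covariant derivative of a (1,2)-tensor field. -/
def covT2 (Γ : V → V → V → V) (A : V → V → V → V) (p x u v : V) : V :=
  fderiv ℝ (fun q => A q u v) p x + Γ p x (A p u v)
    - A p (Γ p x u) v - A p u (Γ p x v)

/-- Covariant derivative of a (1,3)-tensor field. -/
def covT3 (Γ : V → V → V → V) (B : V → V → V → V → V) (p x u v w : V) : V :=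
  fderiv ℝ (fun q => B q u v w) p x + Γ p x (B p u v w)
    - B p (Γ p x u) v w - B p u (Γ p x v) w - B p u v (Γ p x w)

/-- Local symmetry: `∇R = 0`. -/
def LocallySymmetricOn (s : Set V) (Γ : V → V → V → V) : Prop :=
  ∀ p ∈ s, ∀ x u v w : V, covT3 Γ (Rm Γ) p x u v w = 0

/-- Constant sectional curvature `k`. -/
def ConstCurvOn (s : Set V) (g : V → V → V → ℝ) (Γ : V → V → V → V) (k : ℝ) : Prop :=
  ∀ p ∈ s, ∀ u v w : V, Rm Γ p u v w = k • (g p v w • u - g p u w • v)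

def HasConstCurv (s : Set V) (g : V → V → V → ℝ) (k : ℝ) : Prop :=
  ∃ Γ : V → V → V → V, IsLeviCivitaOn s g Γ ∧ ConstCurvOn s g Γ k

/-- Torsion of a connection (with the factor 1/2 normalization of the paper). -/
def torsion (Γ : V → V → V → V) (p u v : V) : V := (2 : ℝ)⁻¹ • (Γ p u v - Γ p v u)

/-- An almost contact metric structure on `s`. -/
structure ACM (s : Set V) where
  phi : V → V → V
  xi : V → V
  eta : V → V → ℝ
  g : V → V → V → ℝ
  smooth_phi : ∀ u : V, ContDiffOn ℝ (⊤ : ℕ∞) (fun p => phi p u) s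
  smooth_xi : ContDiffOn ℝ (⊤ : ℕ∞) xi s
  smooth_eta : ∀ u : V, ContDiffOn ℝ (⊤ : ℕ∞) (fun p => eta p u) s
  lin_phi : ∀ p ∈ s, IsLinearMap ℝ (phi p)
  lin_eta : ∀ p ∈ s, IsLinearMap ℝ (eta p)
  metric : IsMetricOn s g
  phi_sq : ∀ p ∈ s, ∀ u : V, phi p (phi p u) = -u + eta p u • xi p
  eta_xi : ∀ p ∈ s, eta p (xi p) = 1
  compat : ∀ p ∈ s, ∀ u v : V, g p (phi p u) (phi p v) = g p u v - eta p u * eta p v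

/-- Fundamental 2-form `Φ(u,v) = g(u, φ v)`. -/
def FPhi {s : Set V} (S : ACM s) (p u v : V) : ℝ := S.g p u (S.phi p v)

/-- Lie derivative `(L_ξ φ)(u)` at `p` (constant extension of `u`). -/
def lieXiPhi (phi : V → V → V) (xi : V → V) (p u : V) : V :=
  fderiv ℝ (fun q => phi q u) p (xi p) - fderiv ℝ xi p (phi p u)
    + phi p (fderiv ℝ xi p u)

/-- The operator `h' = (1/(2α)) (L_ξ φ) ∘ φ`. -/
def hpr (α : ℝ) (phi : V → V → V) (xi : V → V) (p u : V) : V :=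
  (1 / (2 * α)) • lieXiPhi phi xi p (phi p u)

/-- `dη(u,v)` (constant extensions). -/
def dEta (eta : V → V → ℝ) (p u v : V) : ℝ :=
  fderiv ℝ (fun q => eta q v) p u - fderiv ℝ (fun q => eta q u) p v

/-- `S` is an almost α-Kenmotsu structure on `s` : `dη = 0` and `dΦ = 2α η ∧ Φ`. -/
structure IsAK (s : Set V) (S : ACM s) (α : ℝ) : Prop where
  pos : 0 < α
  deta : ∀ p ∈ s, ∀ u v : V, dEta S.eta p u v = 0
  dphi : ∀ p ∈ s, ∀ u v w : V,
    fderiv ℝ (fun q => FPhi S q v w) p u - fderiv ℝ (fun q => FPhi S q u w) p v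
      + fderiv ℝ (fun q => FPhi S q u v) p w
    = 2 * α * (S.eta p u * FPhi S p v w - S.eta p v * FPhi S p u w
        + S.eta p w * FPhi S p u v)

/-- Nijenhuis torsion `[φ,φ](u,v)` at `p` (constant extensions). -/
def nijPhi (phi : V → V → V) (p u v : V) : V :=
  fderiv ℝ (fun q => phi q v) p (phi p u) - fderiv ℝ (fun q => phi q u) p (phi p v)
    + phi p (fderiv ℝ (fun q => phi q u) p v) - phi p (fderiv ℝ (fun q => phi q v) p u)

/-- Normality: `N = [φ,φ] + 2 dη ⊗ ξ = 0`. -/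
def IsNormal (s : Set V) (S : ACM s) : Prop :=
  ∀ p ∈ s, ∀ u v : V, nijPhi S.phi p u v + (2 * dEta S.eta p u v) • S.xi p = 0

/-- CR-integrability: the Nijenhuis torsion of φ vanishes on `D = ker η`
(equivalently the integral manifolds of `D` are Kähler). -/
def CRIntegrableOn (s : Set V) (S : ACM s) : Prop :=
  ∀ p ∈ s, ∀ u v : V, S.eta p u = 0 → S.eta p v = 0 → nijPhi S.phi p u v = 0

/-- `ξ` belongs to the (κ,μ)'-nullity distribution. -/
def KMuNullity (s : Set V) (S : ACM s) (α κ μ : ℝ) (Γ : V → V → V → V) : Prop :=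
  ∀ p ∈ s, ∀ u v : V,
    Rm Γ p u v (S.xi p)
      = κ • (S.eta p v • u - S.eta p u • v)
        + μ • (S.eta p v • hpr α S.phi S.xi p u - S.eta p u • hpr α S.phi S.xi p v)

/-- `h'` is η-parallel. -/
def EtaParallelH (s : Set V) (S : ACM s) (α : ℝ) (Γ : V → V → V → V) : Prop :=
  ∀ p ∈ s, ∀ u v w : V, S.eta p u = 0 → S.eta p v = 0 → S.eta p w = 0 →
    S.g p (covOp Γ (hpr α S.phi S.xi) p u v) w = 0

/-- `∇_ξ h' = 0`. -/
def XiParallelH (s : Set V) (S : ACM s) (α : ℝ) (Γ : V → V → V → V) : Prop :=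
  ∀ p ∈ s, ∀ v : V, covOp Γ (hpr α S.phi S.xi) p (S.xi p) v = 0

/-- The canonical connection `∇̃_X Y = ∇_X Y + α g(X + h'X, Y)ξ − α η(Y)(X + h'X)`. -/
def canonical {s : Set V} (α : ℝ) (S : ACM s) (Γ : V → V → V → V) : V → V → V → V :=
  fun p u v =>
    Γ p u v + (α * S.g p (u + hpr α S.phi S.xi p u) v) • S.xi p
      - (α * S.eta p v) • (u + hpr α S.phi S.xi p u)

def ParallelTorsion (s : Set V) (Γ : V → V → V → V) : Prop :=
  ∀ p ∈ s, ∀ x u v : V, covT2 Γ (torsion Γ) p x u v = 0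

def ParallelCurv (s : Set V) (Γ : V → V → V → V) : Prop :=
  ∀ p ∈ s, ∀ x u v w : V, covT3 Γ (Rm Γ) p x u v w = 0

def FlatCurv (s : Set V) (Γ : V → V → V → V) : Prop :=
  ∀ p ∈ s, ∀ u v w : V, Rm Γ p u v w = 0

def HasEigen (h : V → V) (c : ℝ) : Prop := ∃ u : V, u ≠ 0 ∧ h u = c • u

/-- Multiplicity of the eigenvalue `c` of a (pointwise linear) operator. -/
def eigMult (h : V → V) (c : ℝ) : ℕ :=
  Module.finrank ℝ ↥(Submodule.span ℝ {u : V | h u = c • u})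

/-- `0` is a simple eigenvalue of `h'`: its kernel is spanned by `ξ`. -/
def KernelIsXiLine (xi₀ : V) (h : V → V) : Prop :=
  ∀ u : V, h u = 0 → ∃ a : ℝ, u = a • xi₀

def hprNonzero (s : Set V) (S : ACM s) (α : ℝ) : Prop :=
  ∃ p ∈ s, ∃ u : V, hpr α S.phi S.xi p u ≠ 0

/-- `S'` is the D-homothetic deformation of `S` with constant `β`. -/
def IsDHom (s : Set V) (S S' : ACM s) (β : ℝ) : Prop :=
  ∀ p ∈ s,
    (∀ u : V, S'.phi p u = S.phi p u) ∧ S'.xi p = β⁻¹ • S.xi p ∧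
    (∀ u : V, S'.eta p u = β * S.eta p u) ∧
    (∀ u v : V, S'.g p u v = β * S.g p u v + β * (β - 1) * (S.eta p u * S.eta p v))

/-- Local equivalence of almost contact metric structures. -/
def LocallyEquivalent (s : Set V) (S : ACM s) (s' : Set V) (S' : ACM s') : Prop :=
  ∀ p ∈ s, ∀ q ∈ s', ∃ (U U' : Set V) (f finv : V → V),
    p ∈ U ∧ IsOpen U ∧ U ⊆ s ∧ q ∈ U' ∧ IsOpen U' ∧ U' ⊆ s' ∧ f p = q ∧
    ContDiffOn ℝ (⊤ : ℕ∞) f U ∧ Set.BijOn f U U' ∧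
    ContDiffOn ℝ (⊤ : ℕ∞) finv U' ∧ (∀ x ∈ U, finv (f x) = x) ∧
    ∀ x ∈ U,
      fderiv ℝ f x (S.xi x) = S'.xi (f x) ∧
      (∀ u : V, fderiv ℝ f x (S.phi x u) = S'.phi (f x) (fderiv ℝ f x u)) ∧
      (∀ u : V, S'.eta (f x) (fderiv ℝ f x u) = S.eta x u) ∧
      (∀ u v : V, S'.g (f x) (fderiv ℝ f x u) (fderiv ℝ f x v) = S.g x u v)

/-- Local equivalence up to a D-homothetic deformation. -/
def EquivUpToDHom (s : Set V) (S : ACM s) (s' : Set V) (S' : ACM s') : Prop :=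
  ∃ β : ℝ, 0 < β ∧ ∃ S₁ : ACM s, IsDHom s S S₁ β ∧ LocallyEquivalent s S₁ s' S'

/-- Involutivity (integrability) of a distribution. -/
def IsInvolutive (s : Set V) (D : V → Set V) : Prop :=
  ∀ X Y : V → V, (∀ p ∈ s, DifferentiableAt ℝ X p) → (∀ p ∈ s, DifferentiableAt ℝ Y p) →
    (∀ p ∈ s, X p ∈ D p) → (∀ p ∈ s, Y p ∈ D p) →
    ∀ p ∈ s, fderiv ℝ Y p (X p) - fderiv ℝ X p (Y p) ∈ D p

/-- The leaves of the distribution `D` are totally geodesic. -/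
def TotallyGeodesicDist (s : Set V) (D : V → Set V) (Γ : V → V → V → V) : Prop :=
  ∀ X Y : V → V, (∀ p ∈ s, DifferentiableAt ℝ X p) → (∀ p ∈ s, DifferentiableAt ℝ Y p) →
    (∀ p ∈ s, X p ∈ D p) → (∀ p ∈ s, Y p ∈ D p) →
    ∀ p ∈ s, cov Γ Y p (X p) ∈ D p

/-- The leaves of the distribution `D` are totally umbilical. -/
def TotallyUmbilicalDist (s : Set V) (D : V → Set V) (g : V → V → V → ℝ)
    (Γ : V → V → V → V) : Prop :=
  ∃ H : V → V, (∀ p ∈ s, ∀ w ∈ D p, g p (H p) w = 0) ∧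
    ∀ X Y : V → V, (∀ p ∈ s, DifferentiableAt ℝ X p) → (∀ p ∈ s, DifferentiableAt ℝ Y p) →
      (∀ p ∈ s, X p ∈ D p) → (∀ p ∈ s, Y p ∈ D p) →
      ∀ p ∈ s, cov Γ Y p (X p) - g p (X p) (Y p) • H p ∈ D p

/-- The eigendistribution `[λ]` of `h'`. -/
def eigDist {s : Set V} (α : ℝ) (S : ACM s) (lam : ℝ) : V → Set V :=
  fun p => {u : V | hpr α S.phi S.xi p u = lam • u ∧ S.eta p u = 0}

/-- The distribution `[ξ] ⊕ [λ]`. -/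
def xiPlusEigDist {s : Set V} (α : ℝ) (S : ACM s) (lam : ℝ) : V → Set V :=
  fun p => {u : V | hpr α S.phi S.xi p u = lam • (u - S.eta p u • S.xi p)}

/-- An almost Hermitian structure on an open set of `E m`. -/
structure AHerm (m : ℕ) (W : Set (E m)) where
  J : E m → E m → E m
  h : E m → E m → E m → ℝ
  smooth_J : ∀ u : E m, ContDiffOn ℝ (⊤ : ℕ∞) (fun p => J p u) W
  lin_J : ∀ p ∈ W, IsLinearMap ℝ (J p)
  metric : IsMetricOn W h
  J_sq : ∀ p ∈ W, ∀ u : E m, J p (J p u) = -u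
  compat : ∀ p ∈ W, ∀ u v : E m, h p (J p u) (J p v) = h p u v

/-- The Kähler form of an almost Hermitian structure. -/
def Kform {m : ℕ} {W : Set (E m)} (K : AHerm m W) (p u v : E m) : ℝ := K.h p u (K.J p v)

/-- Almost Kähler: the Kähler form is closed. -/
def IsAlmostKaehler {m : ℕ} {W : Set (E m)} (K : AHerm m W) : Prop :=
  ∀ p ∈ W, ∀ u v w : E m,
    fderiv ℝ (fun q => Kform K q v w) p u - fderiv ℝ (fun q => Kform K q u w) p v
      + fderiv ℝ (fun q => Kform K q u v) p w = 0

/-- Kähler: almost Kähler with integrable `J`. -/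
def IsKaehler {m : ℕ} {W : Set (E m)} (K : AHerm m W) : Prop :=
  IsAlmostKaehler K ∧ ∀ p ∈ W, ∀ u v : E m, nijPhi K.J p u v = 0

/-- `M` is locally a warped product `M' ×_f N` of an open interval and an almost
Kähler manifold, with warping function `f = c e^{α t}`. -/
def LocWarpedIntervalAK (n : ℕ) (s : Set (E (2*n+1))) (S : ACM s) (α : ℝ) : Prop :=
  ∀ p ∈ s, ∃ (U : Set (E (2*n+1))) (I : Set ℝ) (W : Set (E (2*n)))
    (K : AHerm (2*n) W) (c : ℝ) (ψ : E (2*n+1) → ℝ × E (2*n))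
    (χ : ℝ × E (2*n) → E (2*n+1)),
    p ∈ U ∧ IsOpen U ∧ U ⊆ s ∧ IsOpen I ∧ I.OrdConnected ∧ IsOpen W ∧
    IsAlmostKaehler K ∧ 0 < c ∧
    ContDiffOn ℝ (⊤ : ℕ∞) ψ U ∧ Set.BijOn ψ U (I ×ˢ W) ∧
    ContDiffOn ℝ (⊤ : ℕ∞) χ (I ×ˢ W) ∧ (∀ x ∈ U, χ (ψ x) = x) ∧
    ∀ q ∈ U, ∀ u v : E (2*n+1),
      S.g q u v = (fderiv ℝ ψ q u).1 * (fderiv ℝ ψ q v).1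
        + (c * Real.exp (α * (ψ q).1))^2
          * K.h (ψ q).2 (fderiv ℝ ψ q u).2 (fderiv ℝ ψ q v).2

/-- Local isometry with a Riemannian product of constant curvature manifolds. -/
def LocIsomProd (m n₁ n₂ : ℕ) (s : Set (E m)) (g : E m → E m → E m → ℝ)
    (k₁ k₂ : ℝ) : Prop :=
  ∀ p ∈ s, ∃ (U : Set (E m)) (W₁ : Set (E n₁)) (W₂ : Set (E n₂))
    (g₁ : E n₁ → E n₁ → E n₁ → ℝ) (g₂ : E n₂ → E n₂ → E n₂ → ℝ)
    (ψ : E m → E n₁ × E n₂) (χ : E n₁ × E n₂ → E m),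
    p ∈ U ∧ IsOpen U ∧ U ⊆ s ∧ IsOpen W₁ ∧ IsOpen W₂ ∧
    IsMetricOn W₁ g₁ ∧ IsMetricOn W₂ g₂ ∧
    HasConstCurv W₁ g₁ k₁ ∧ HasConstCurv W₂ g₂ k₂ ∧
    ContDiffOn ℝ (⊤ : ℕ∞) ψ U ∧ Set.BijOn ψ U (W₁ ×ˢ W₂) ∧
    ContDiffOn ℝ (⊤ : ℕ∞) χ (W₁ ×ˢ W₂) ∧ (∀ x ∈ U, χ (ψ x) = x) ∧
    ∀ q ∈ U, ∀ u v : E m,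
      g q u v = g₁ (ψ q).1 (fderiv ℝ ψ q u).1 (fderiv ℝ ψ q v).1
        + g₂ (ψ q).2 (fderiv ℝ ψ q u).2 (fderiv ℝ ψ q v).2

/-- The axioms characterizing the canonical connection of a CR-integrable
almost α-Kenmotsu structure: `φ`, `g`, `η` parallel, together with the
torsion conditions a), b), c). -/
def IsCanonicalFor (s : Set V) (S : ACM s) (α : ℝ) (Γt : V → V → V → V) : Prop :=
  IsConnectionOn s Γt ∧
  (∀ p ∈ s, ∀ u v : V, covOp Γt S.phi p u v = 0) ∧
  (∀ p ∈ s, ∀ u v w : V,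
    fderiv ℝ (fun q => S.g q v w) p u = S.g p (Γt p u v) w + S.g p v (Γt p u w)) ∧
  (∀ p ∈ s, ∀ u v : V, fderiv ℝ (fun q => S.eta q v) p u = S.eta p (Γt p u v)) ∧
  (∀ p ∈ s, ∀ u v : V, S.eta p u = 0 → S.eta p v = 0 → torsion Γt p u v = 0) ∧
  (∀ p ∈ s, ∀ u : V, S.eta p u = 0 →
    (2 : ℝ) • torsion Γt p (S.xi p) u = α • (u + hpr α S.phi S.xi p u)) ∧
  (∀ p ∈ s, ∀ u v : V, S.g p (torsion Γt p (S.xi p) u) v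
    = S.g p u (torsion Γt p (S.xi p) v))


/-! The whole argument rests on the formula `∇ξ = α (I - η ⊗ ξ + h')`, which follows from
`dη = 0` and `dΦ = 2α η ∧ Φ` alone. It gives `η ∘ h' = 0`, `h' ξ = 0`, the symmetry of `h'`,
and for the canonical connection `∇̃ξ = 0`, `∇̃η = 0` and the torsion
`T̃(X,Y) = (α/2)(η(X)(Y + h'Y) - η(Y)(X + h'X))`. Differentiating,
`(∇̃_X T̃)(Y,Z) = (α/2)(η(Y)(∇̃_X h')Z - η(Z)(∇̃_X h')Y)`, and since `(∇̃_X h')ξ = 0`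
this is (a) ⇔ (b). For (b) ⇔ (c): `∇̃_ξ h' = ∇_ξ h'`, and on `D × D` the tensor `∇̃h'` is
the `D`-component of `∇h'`, because the `ξ`-component of `(∇_X h')Y` is `-α g(X + h'X, h'Y)`.
A tensor vanishing on `D × D`, on `ξ × TM` and on `TM × ξ` vanishes. -/

namespace ACM

variable {s : Set V} (S : ACM s) {p : V} (hp : p ∈ s)
include hp

theorem g_comm (u v : V) : S.g p u v = S.g p v u := S.metric.2.1 p hp u v

theorem isLinearMap_g_left (v : V) : IsLinearMap ℝ (fun u => S.g p u v) :=
  S.metric.2.2.1 p hp v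

theorem isLinearMap_g_right (u : V) : IsLinearMap ℝ (S.g p u) := by
  rw [show S.g p u = fun v => S.g p v u from funext (S.g_comm hp u)]
  exact S.isLinearMap_g_left hp u

theorem g_add_left (a b c : V) : S.g p (a + b) c = S.g p a c + S.g p b c :=
  (S.isLinearMap_g_left hp c).map_add a b

theorem g_sub_left (a b c : V) : S.g p (a - b) c = S.g p a c - S.g p b c :=
  (S.isLinearMap_g_left hp c).map_sub a b

theorem g_neg_left (a c : V) : S.g p (-a) c = -S.g p a c :=
  (S.isLinearMap_g_left hp c).map_neg a

theorem g_smul_left (r : ℝ) (a c : V) : S.g p (r • a) c = r * S.g p a c :=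
  (S.isLinearMap_g_left hp c).map_smul r a

theorem g_zero_left (c : V) : S.g p 0 c = 0 := (S.isLinearMap_g_left hp c).map_zero

theorem g_add_right (c a b : V) : S.g p c (a + b) = S.g p c a + S.g p c b :=
  (S.isLinearMap_g_right hp c).map_add a b

theorem g_sub_right (c a b : V) : S.g p c (a - b) = S.g p c a - S.g p c b :=
  (S.isLinearMap_g_right hp c).map_sub a b

theorem g_neg_right (c a : V) : S.g p c (-a) = -S.g p c a :=
  (S.isLinearMap_g_right hp c).map_neg a

theorem g_smul_right (r : ℝ) (c a : V) : S.g p c (r • a) = r * S.g p c a :=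
  (S.isLinearMap_g_right hp c).map_smul r a

theorem g_zero_right (c : V) : S.g p c 0 = 0 := (S.isLinearMap_g_right hp c).map_zero

theorem eq_zero_of_forall_g_eq_zero {w : V} (h : ∀ u : V, S.g p w u = 0) : w = 0 := by
  by_contra hw
  exact (S.metric.2.2.2 p hp w hw).ne' (h w)

theorem phi_xi : S.phi p (S.xi p) = 0 := by
  set a := S.phi p (S.xi p)
  have hφa : S.phi p a = 0 := by
    rw [S.phi_sq p hp, S.eta_xi p hp, one_smul, neg_add_cancel]
  -- `φ² a = 0` forces `a = η(a) ξ`, and then `0 = φ a = η(a) a = η(a)² ξ`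
  have ha : a = S.eta p a • S.xi p := by
    have h := S.phi_sq p hp a
    rwa [hφa, (S.lin_phi p hp).map_zero, eq_comm, neg_add_eq_zero] at h
  have hsq : (S.eta p a * S.eta p a) • S.xi p = 0 := by
    rw [mul_smul, ← ha, ← (S.lin_phi p hp).map_smul, ← ha, hφa]
  have hη : S.eta p a * S.eta p a = 0 := by
    simpa [(S.lin_eta p hp).map_smul, S.eta_xi p hp, (S.lin_eta p hp).map_zero]
      using congrArg (S.eta p) hsq
  rw [ha, mul_self_eq_zero.mp hη, zero_smul]

theorem eta_phi (u : V) : S.eta p (S.phi p u) = 0 := by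
  have hcube : S.phi p (S.phi p (S.phi p u)) = -S.phi p u := by
    rw [S.phi_sq p hp u, (S.lin_phi p hp).map_add, (S.lin_phi p hp).map_neg,
      (S.lin_phi p hp).map_smul, S.phi_xi hp, smul_zero, add_zero]
  rw [S.phi_sq p hp, add_eq_left] at hcube
  simpa [(S.lin_eta p hp).map_smul, S.eta_xi p hp, (S.lin_eta p hp).map_zero]
    using congrArg (S.eta p) hcube

theorem g_xi (u : V) : S.g p u (S.xi p) = S.eta p u := by
  have h := S.compat p hp u (S.xi p)
  rw [S.phi_xi hp, S.g_zero_right hp, S.eta_xi p hp, mul_one] at h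
  linarith

theorem g_xi_left (u : V) : S.g p (S.xi p) u = S.eta p u := by
  rw [S.g_comm hp, S.g_xi hp]

theorem g_phi_right (u v : V) : S.g p u (S.phi p v) = -S.g p (S.phi p u) v := by
  have h := S.compat p hp (S.phi p u) v
  rw [S.eta_phi hp, zero_mul, sub_zero, S.phi_sq p hp, S.g_add_left hp, S.g_neg_left hp,
    S.g_smul_left hp, S.g_xi_left hp, S.eta_phi hp, mul_zero, add_zero] at h
  linarith

theorem eta_sub_eta_smul_xi (u : V) : S.eta p (u - S.eta p u • S.xi p) = 0 := by
  rw [(S.lin_eta p hp).map_sub, (S.lin_eta p hp).map_smul, S.eta_xi p hp, smul_eq_mul,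
    mul_one, sub_self]

theorem sub_eta_smul_xi_eq_zero_iff (X : V) :
    X - S.eta p X • S.xi p = 0 ↔ ∀ w : V, S.eta p w = 0 → S.g p X w = 0 := by
  constructor
  · intro h w hw
    rw [sub_eq_zero.mp h, S.g_smul_left hp, S.g_xi_left hp, hw, mul_zero]
  · intro h
    refine S.eq_zero_of_forall_g_eq_zero hp fun w => ?_
    have hX := h _ (S.eta_sub_eta_smul_xi hp w)
    rw [S.g_sub_right hp, S.g_smul_right hp, S.g_xi hp] at hX
    rw [S.g_sub_left hp, S.g_smul_left hp, S.g_xi_left hp]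
    linarith

theorem bilinear_eq_zero_of_ker_eta_of_xi {f : V → V → V} (hl : ∀ v, IsLinearMap ℝ (fun u => f u v))
    (hr : ∀ u, IsLinearMap ℝ (f u))
    (hD : ∀ u v, S.eta p u = 0 → S.eta p v = 0 → f u v = 0)
    (hξl : ∀ v, f (S.xi p) v = 0) (hξr : ∀ u, f u (S.xi p) = 0) (u v : V) : f u v = 0 := by
  have hsplit : ∀ w : V, w = (w - S.eta p w • S.xi p) + S.eta p w • S.xi p := fun w => by abel
  rw [hsplit u, (hl v).map_add, (hl v).map_smul, hξl, smul_zero, add_zero, hsplit v,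
    (hr _).map_add, (hr _).map_smul, hξr, smul_zero, add_zero,
    hD _ _ (S.eta_sub_eta_smul_xi hp u) (S.eta_sub_eta_smul_xi hp v)]

end ACM

section PointwiseCLM

variable {W : Type*} [NormedAddCommGroup W] [NormedSpace ℝ W] [FiniteDimensional ℝ V]

/-- Packaging a pointwise linear family into `V →L[ℝ] W` (through a basis) makes the calculus
of `fderiv` available; it agrees with `T q` wherever `T q` is linear. -/
def pointwiseCLM (T : V → V → W) (q : V) : V →L[ℝ] W :=
  ∑ i, (LinearMap.toContinuousLinearMap ((Module.finBasis ℝ V).coord i)).smulRight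
    (T q (Module.finBasis ℝ V i))

theorem pointwiseCLM_apply {T : V → V → W} {q : V} (h : IsLinearMap ℝ (T q)) (u : V) :
    pointwiseCLM T q u = T q u := by
  let b := Module.finBasis ℝ V
  calc pointwiseCLM T q u = ∑ i, b.repr u i • T q (b i) := by
        simp [pointwiseCLM, b, Module.Basis.coord_apply]
    _ = T q (∑ i, b.repr u i • b i) := by
        have h2 := map_sum (IsLinearMap.mk' (T q) h) (fun i => b.repr u i • b i) Finset.univ
        simp only [map_smul, IsLinearMap.mk'_apply] at h2
        exact h2.symm
    _ = T q u := by rw [b.sum_repr u]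

theorem contDiffOn_pointwiseCLM {T : V → V → W} {s : Set V}
    (h : ∀ u, ContDiffOn ℝ (⊤ : ℕ∞) (fun q => T q u) s) :
    ContDiffOn ℝ (⊤ : ℕ∞) (pointwiseCLM T) s :=
  ContDiffOn.sum fun i _ => (ContinuousLinearMap.smulRightL ℝ V W
    (LinearMap.toContinuousLinearMap ((Module.finBasis ℝ V).coord i))).contDiff.comp_contDiffOn
      (h _)

end PointwiseCLM

section Calculus

variable {W : Type*} [NormedAddCommGroup W] [NormedSpace ℝ W] {s : Set V} {p : V}

theorem fderiv_congr_of_isOpen (hs : IsOpen s) (hp : p ∈ s) {f g : V → W}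
    (h : ∀ q ∈ s, f q = g q) : fderiv ℝ f p = fderiv ℝ g p :=
  (Filter.eventuallyEq_of_mem (hs.mem_nhds hp) h).fderiv_eq

theorem _root_.ContDiffOn.differentiableAt_of_isOpen {f : V → W}
    (h : ContDiffOn ℝ (⊤ : ℕ∞) f s) (hs : IsOpen s) (hp : p ∈ s) : DifferentiableAt ℝ f p :=
  (h.differentiableOn (by simp)).differentiableAt (hs.mem_nhds hp)

theorem fderiv_clm_apply_const {F : V → V →L[ℝ] W} (hF : DifferentiableAt ℝ F p) (w x : V) :
    fderiv ℝ (fun q => F q w) p x = fderiv ℝ F p x w := by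
  simp [fderiv_clm_apply hF (differentiableAt_const w)]

theorem fderiv_clm_apply₂ {F : V → V →L[ℝ] V →L[ℝ] W} (hF : DifferentiableAt ℝ F p)
    {X Y : V → V} (hX : DifferentiableAt ℝ X p) (hY : DifferentiableAt ℝ Y p) (x : V) :
    fderiv ℝ (fun q => F q (X q) (Y q)) p x
      = fderiv ℝ F p x (X p) (Y p) + F p (fderiv ℝ X p x) (Y p)
        + F p (X p) (fderiv ℝ Y p x) := by
  rw [fderiv_clm_apply (hF.clm_apply hX) hY, fderiv_clm_apply hF hX]
  simp only [add_apply, ContinuousLinearMap.coe_comp, Function.comp_apply,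
    ContinuousLinearMap.flip_apply]
  abel

end Calculus

namespace ACM

variable [FiniteDimensional ℝ V] {s : Set V} (S : ACM s)

def phiCLM : V → V →L[ℝ] V := pointwiseCLM S.phi

def gCLM : V → V →L[ℝ] V →L[ℝ] ℝ :=
  pointwiseCLM fun q a => pointwiseCLM (fun r b => S.g r a b) q

theorem phiCLM_apply {q : V} (hq : q ∈ s) (u : V) : S.phiCLM q u = S.phi q u :=
  pointwiseCLM_apply (S.lin_phi q hq) u

theorem gCLM_apply {q : V} (hq : q ∈ s) (a b : V) : S.gCLM q a b = S.g q a b := by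
  have hlin : IsLinearMap ℝ fun a : V => pointwiseCLM (fun r b => S.g r a b) q := by
    constructor <;> intros <;> ext w <;>
      simp [pointwiseCLM_apply (T := fun r b => S.g r _ b) (S.isLinearMap_g_right hq _),
        S.g_add_left hq, S.g_smul_left hq]
  rw [gCLM, pointwiseCLM_apply hlin,
    pointwiseCLM_apply (T := fun r b => S.g r a b) (S.isLinearMap_g_right hq a)]

theorem contDiffOn_phiCLM : ContDiffOn ℝ (⊤ : ℕ∞) S.phiCLM s :=
  contDiffOn_pointwiseCLM S.smooth_phi

theorem contDiffOn_gCLM : ContDiffOn ℝ (⊤ : ℕ∞) S.gCLM s :=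
  contDiffOn_pointwiseCLM fun a => contDiffOn_pointwiseCLM fun b => S.metric.1 a b

variable (hs : IsOpen s) {p : V} (hp : p ∈ s)
include hs hp

theorem fderiv_phi_apply (u x : V) :
    fderiv ℝ (fun q => S.phi q u) p x = fderiv ℝ S.phiCLM p x u := by
  rw [fderiv_congr_of_isOpen hs hp (g := fun q => S.phiCLM q u)
    fun q hq => (S.phiCLM_apply hq u).symm]
  exact fderiv_clm_apply_const (S.contDiffOn_phiCLM.differentiableAt_of_isOpen hs hp) u x

omit [FiniteDimensional ℝ V] in
theorem differentiableAt_xi : DifferentiableAt ℝ S.xi p :=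
  S.smooth_xi.differentiableAt_of_isOpen hs hp

end ACM

section Connection

variable {s : Set V} {Γ : V → V → V → V} {p : V}

theorem IsConnectionOn.isLinearMap_left (hΓ : IsConnectionOn s Γ) (hp : p ∈ s) (v : V) :
    IsLinearMap ℝ (fun u => Γ p u v) :=
  hΓ.2.1 p hp v

theorem IsConnectionOn.isLinearMap_right (hΓ : IsConnectionOn s Γ) (hp : p ∈ s) (u : V) :
    IsLinearMap ℝ (Γ p u) :=
  hΓ.2.2 p hp u

theorem isLinearMap_cov (hΓ : ∀ v, IsLinearMap ℝ (fun u => Γ p u v)) (X : V → V) :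
    IsLinearMap ℝ (cov Γ X p) := by
  constructor <;> intros <;> simp only [cov, map_add, map_smul, (hΓ _).map_add, (hΓ _).map_smul]
  · abel
  · rw [smul_add]

theorem cov_const (Γ : V → V → V → V) (a x : V) : cov Γ (fun _ => a) p x = Γ p x a := by
  simp [cov]

end Connection

section LeviCivita

variable [FiniteDimensional ℝ V] {s : Set V} {S : ACM s} {Γ : V → V → V → V} {p : V}
  (hs : IsOpen s) (hΓ : IsLeviCivitaOn s S.g Γ) (hp : p ∈ s)
include hs hΓ hp

theorem fderiv_g_apply_fields {Y Z : V → V} (hY : DifferentiableAt ℝ Y p)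
    (hZ : DifferentiableAt ℝ Z p) (x : V) :
    fderiv ℝ (fun q => S.g q (Y q) (Z q)) p x
      = S.g p (cov Γ Y p x) (Z p) + S.g p (Y p) (cov Γ Z p x) := by
  have hg := S.contDiffOn_gCLM.differentiableAt_of_isOpen hs hp
  have hgCLM : ∀ a b, fderiv ℝ S.gCLM p x a b = S.g p (Γ p x a) b + S.g p a (Γ p x b) := by
    intro a b
    have h := fderiv_clm_apply₂ hg (differentiableAt_const a) (differentiableAt_const b) x
    simp only [fderiv_fun_const, Pi.zero_apply, zero_apply, map_zero, add_zero] at h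
    rw [← h, fderiv_congr_of_isOpen hs hp fun q hq => S.gCLM_apply hq a b]
    exact hΓ.2.2 p hp x a b
  rw [fderiv_congr_of_isOpen hs hp fun q hq => (S.gCLM_apply hq (Y q) (Z q)).symm,
    fderiv_clm_apply₂ hg hY hZ, hgCLM, S.gCLM_apply hp, S.gCLM_apply hp, cov, cov,
    S.g_add_left hp, S.g_add_right hp]
  ring

theorem fderiv_eta_apply (u x : V) :
    fderiv ℝ (fun q => S.eta q u) p x = S.eta p (Γ p x u) + S.g p u (cov Γ S.xi p x) := by
  rw [fderiv_congr_of_isOpen hs hp fun q hq => (S.g_xi hq u).symm,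
    fderiv_g_apply_fields hs hΓ hp (differentiableAt_const u) (S.differentiableAt_xi hs hp),
    cov_const, S.g_xi hp]

theorem g_cov_xi_xi (x : V) : S.g p (cov Γ S.xi p x) (S.xi p) = 0 := by
  have h := fderiv_g_apply_fields hs hΓ hp (S.differentiableAt_xi hs hp)
    (S.differentiableAt_xi hs hp) x
  rw [fderiv_congr_of_isOpen hs hp (g := fun _ => (1 : ℝ))
    fun q hq => by rw [S.g_xi hq, S.eta_xi q hq], S.g_comm hp (S.xi p)] at h
  simp only [fderiv_fun_const, Pi.zero_apply, zero_apply] at h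
  linarith

theorem fderiv_FPhi (x a b : V) :
    fderiv ℝ (fun q => FPhi S q a b) p x
      = S.g p (Γ p x a) (S.phi p b) + S.g p a (cov Γ (fun q => S.phi q b) p x) := by
  rw [← cov_const Γ a x]
  exact fderiv_g_apply_fields hs hΓ hp (differentiableAt_const a)
    ((S.smooth_phi b).differentiableAt_of_isOpen hs hp) x

theorem fderiv_FPhi_xi (x w : V) :
    fderiv ℝ (fun q => FPhi S q (S.xi p) w) p x = -S.g p (fderiv ℝ S.xi p x) (S.phi p w) := by
  have hY : DifferentiableAt ℝ (fun q => S.xi p - S.xi q) p :=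
    (differentiableAt_const _).sub (S.differentiableAt_xi hs hp)
  -- `ξ ⊥ φ w`, so the first slot may be replaced by `ξ(p) - ξ(q)`, which vanishes at `p`
  rw [fderiv_congr_of_isOpen hs hp (g := fun q => S.g q (S.xi p - S.xi q) (S.phi q w))
      fun q hq => by rw [FPhi, S.g_sub_left hq, S.g_xi_left hq, S.eta_phi hq, sub_zero],
    fderiv_g_apply_fields hs hΓ hp hY ((S.smooth_phi w).differentiableAt_of_isOpen hs hp),
    sub_self, S.g_zero_left hp, add_zero, cov,
    fderiv_fun_sub (differentiableAt_const _) (S.differentiableAt_xi hs hp)]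
  simp [(hΓ.1.isLinearMap_right hp x).map_zero, S.g_neg_left hp]

end LeviCivita

theorem fderiv_phi_phi_eq_hpr {α : ℝ} (hα : α ≠ 0) (phi : V → V → V) (xi : V → V) (p v : V) :
    fderiv ℝ (fun q => phi q (phi p v)) p (xi p)
      = (2 * α) • hpr α phi xi p v + fderiv ℝ xi p (phi p (phi p v))
        - phi p (fderiv ℝ xi p (phi p v)) := by
  rw [hpr, lieXiPhi, smul_smul, mul_one_div_cancel (mul_ne_zero two_ne_zero hα), one_smul]
  abel

section AlmostKenmotsu

variable [FiniteDimensional ℝ V] {s : Set V} {S : ACM s} {α : ℝ} {Γ : V → V → V → V} {p : V}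
  (hs : IsOpen s) (hAK : IsAK s S α) (hΓ : IsLeviCivitaOn s S.g Γ) (hp : p ∈ s)
include hs hAK hΓ hp

theorem g_cov_xi_comm (u v : V) :
    S.g p u (cov Γ S.xi p v) = S.g p v (cov Γ S.xi p u) := by
  have h := hAK.deta p hp v u
  rw [dEta, fderiv_eta_apply hs hΓ hp, fderiv_eta_apply hs hΓ hp, hΓ.2.1 p hp v u] at h
  linarith

theorem cov_xi_xi : cov Γ S.xi p (S.xi p) = 0 := by
  have horth : ∀ w, S.g p (S.phi p w) (cov Γ S.xi p (S.xi p)) = 0 := fun w => by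
    rw [g_cov_xi_comm hs hAK hΓ hp, S.g_comm hp, g_cov_xi_xi hs hΓ hp]
  set b := cov Γ S.xi p (S.xi p)
  have hb : S.eta p b = 0 := by rw [← S.g_xi hp, g_cov_xi_xi hs hΓ hp]
  have hφb : S.phi p (-S.phi p b) = b := by
    rw [(S.lin_phi p hp).map_neg, S.phi_sq p hp, hb, zero_smul, add_zero, neg_neg]
  have hbb : S.g p b b = 0 :=
    calc S.g p b b = S.g p (S.phi p (-S.phi p b)) b := by rw [hφb]
      _ = 0 := horth _
  by_contra hb0
  exact (S.metric.2.2.2 p hp b hb0).ne' hbb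

/-- `dΦ(ξ, u, v) = 2α Φ(u, v)`, rewritten with `∇`. -/
theorem dPhi_xi (u v : V) :
    S.g p (cov Γ S.xi p u) (S.phi p v) + S.g p u (cov Γ (fun q => S.phi q v) p (S.xi p))
      - S.g p (fderiv ℝ S.xi p v) (S.phi p u) = 2 * α * S.g p u (S.phi p v) := by
  have h := hAK.dphi p hp (S.xi p) u v
  rw [fderiv_FPhi hs hΓ hp, fderiv_FPhi_xi hs hΓ hp, fderiv_FPhi_xi hs hΓ hp] at h
  simp only [FPhi, S.eta_xi p hp, S.g_xi_left hp, S.eta_phi hp] at h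
  rw [cov, hΓ.2.1 p hp, S.g_add_left hp]
  linarith

theorem g_cov_xi (u v : V) :
    S.g p u (cov Γ S.xi p v)
      = α * (S.g p u v - S.eta p u * S.eta p v + S.g p u (hpr α S.phi S.xi p v)) := by
  have hw : S.phi p (S.phi p v) = -v + S.eta p v • S.xi p := S.phi_sq p hp v
  have hcovw : cov Γ S.xi p (S.phi p (S.phi p v)) = -cov Γ S.xi p v := by
    have hlin := isLinearMap_cov (hΓ.1.isLinearMap_left hp) S.xi
    rw [hw, hlin.map_add, hlin.map_neg, hlin.map_smul, cov_xi_xi hs hAK hΓ hp, smul_zero,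
      add_zero]
  have hLie : cov Γ (fun q => S.phi q (S.phi p v)) p (S.xi p)
      = (2 * α) • hpr α S.phi S.xi p v + cov Γ S.xi p (S.phi p (S.phi p v))
        - S.phi p (fderiv ℝ S.xi p (S.phi p v)) := by
    rw [cov, cov, fderiv_phi_phi_eq_hpr (hAK.pos.ne'), hΓ.2.1 p hp (S.xi p)]
    abel
  -- in `dΦ(ξ, u, φ v)` the `L_ξ φ` term is `2α h' v` up to terms that cancel by skew-symmetry
  have h := dPhi_xi hs hAK hΓ hp u (S.phi p v)
  rw [hLie, hcovw, S.g_sub_right hp, S.g_add_right hp, S.g_smul_right hp, S.g_phi_right hp u,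
    S.g_comm hp (fderiv ℝ S.xi p _), S.g_neg_right hp] at h
  simp only [hw, S.g_add_right hp, S.g_neg_right hp, S.g_smul_right hp, S.g_xi hp] at h
  rw [← S.g_xi hp (cov Γ S.xi p u), g_cov_xi_xi hs hΓ hp, S.g_comm hp (cov Γ S.xi p u),
    g_cov_xi_comm hs hAK hΓ hp v u] at h
  linarith

theorem cov_xi_eq (v : V) :
    cov Γ S.xi p v = α • (v - S.eta p v • S.xi p + hpr α S.phi S.xi p v) := by
  rw [← sub_eq_zero]
  refine S.eq_zero_of_forall_g_eq_zero hp fun u => ?_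
  rw [S.g_comm hp, S.g_sub_right hp, g_cov_xi hs hAK hΓ hp, S.g_smul_right hp,
    S.g_add_right hp, S.g_sub_right hp, S.g_smul_right hp, S.g_xi hp]
  ring

theorem eta_hpr (v : V) : S.eta p (hpr α S.phi S.xi p v) = 0 := by
  have h := g_cov_xi_xi hs hΓ hp v
  rw [cov_xi_eq hs hAK hΓ hp, S.g_smul_left hp, S.g_add_left hp, S.g_xi hp, S.g_xi hp,
    S.eta_sub_eta_smul_xi hp, zero_add] at h
  exact (mul_eq_zero.mp h).resolve_left hAK.pos.ne'

theorem hpr_xi : hpr α S.phi S.xi p (S.xi p) = 0 := by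
  have h := cov_xi_eq hs hAK hΓ hp (S.xi p)
  rw [cov_xi_xi hs hAK hΓ hp, S.eta_xi p hp, one_smul, sub_self, zero_add] at h
  exact (smul_eq_zero.mp h.symm).resolve_left hAK.pos.ne'

theorem g_hpr_comm (u v : V) :
    S.g p (hpr α S.phi S.xi p u) v = S.g p u (hpr α S.phi S.xi p v) := by
  have h := g_cov_xi_comm hs hAK hΓ hp v u
  rw [g_cov_xi hs hAK hΓ hp, g_cov_xi hs hAK hΓ hp, S.g_comm hp v u, S.g_comm hp v] at h
  exact mul_left_cancel₀ hAK.pos.ne' (by linarith)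

end AlmostKenmotsu

namespace ACM

variable [FiniteDimensional ℝ V] {s : Set V} (S : ACM s) (α : ℝ)

/-- `h'` as a field of continuous linear maps, by expanding `L_ξ φ` in terms of `φ`, `ξ` and
their derivatives; unlike `hpr` itself it is visibly smooth. -/
def hprCLM (q : V) : V →L[ℝ] V :=
  (1 / (2 * α)) • ((fderiv ℝ S.phiCLM q (S.xi q)).comp (S.phiCLM q)
    - (fderiv ℝ S.xi q).comp ((S.phiCLM q).comp (S.phiCLM q))
    + (S.phiCLM q).comp ((fderiv ℝ S.xi q).comp (S.phiCLM q)))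

variable {S} (hs : IsOpen s)
include hs

theorem hprCLM_apply {q : V} (hq : q ∈ s) (u : V) :
    S.hprCLM α q u = hpr α S.phi S.xi q u := by
  simp only [hprCLM, hpr, lieXiPhi, FunLike.coe_smul, Pi.smul_apply, add_apply,
    sub_apply, ContinuousLinearMap.coe_comp, Function.comp_apply, S.phiCLM_apply hq,
    S.fderiv_phi_apply hs hq]

theorem contDiffOn_hprCLM : ContDiffOn ℝ (⊤ : ℕ∞) (S.hprCLM α) s := by
  have hle : ((⊤ : ℕ∞) : WithTop ℕ∞) + 1 ≤ ((⊤ : ℕ∞) : WithTop ℕ∞) := by simp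
  have hdφ := S.contDiffOn_phiCLM.fderiv_of_isOpen hs hle
  have hdξ := S.smooth_xi.fderiv_of_isOpen hs hle
  have hφ := S.contDiffOn_phiCLM
  exact (((hdφ.clm_apply S.smooth_xi).clm_comp hφ).sub (hdξ.clm_comp (hφ.clm_comp hφ))).add
    (hφ.clm_comp (hdξ.clm_comp hφ)) |>.const_smul _

variable {p : V} (hp : p ∈ s)
include hp

theorem isLinearMap_hpr : IsLinearMap ℝ (hpr α S.phi S.xi p) := by
  rw [← funext (hprCLM_apply α hs hp)]
  exact (S.hprCLM α p).toLinearMap.isLinear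

end ACM

section CovOp

variable {s : Set V} {Γ : V → V → V → V} {A : V → V → V} {B : V → V →L[ℝ] V} {p : V}
  (hs : IsOpen s) (hp : p ∈ s) (hAB : ∀ q ∈ s, ∀ v, A q v = B q v)
  (hB : DifferentiableAt ℝ B p)
include hs hp hAB hB

theorem covOp_eq_of_eqOn_clm (u v : V) :
    covOp Γ A p u v = fderiv ℝ B p u v + Γ p u (B p v) - B p (Γ p u v) := by
  rw [covOp, fderiv_congr_of_isOpen hs hp fun q hq => hAB q hq v, fderiv_clm_apply_const hB,
    funext (hAB p hp)]

theorem isLinearMap_covOp_left (hΓ : ∀ v, IsLinearMap ℝ (fun u => Γ p u v)) (v : V) :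
    IsLinearMap ℝ (fun u => covOp Γ A p u v) := by
  constructor <;> intros <;>
    simp only [covOp_eq_of_eqOn_clm hs hp hAB hB, map_add, map_smul, add_apply, smul_apply,
      (hΓ _).map_add, (hΓ _).map_smul] <;> module

theorem isLinearMap_covOp_right (hΓ : ∀ u, IsLinearMap ℝ (Γ p u)) (u : V) :
    IsLinearMap ℝ (covOp Γ A p u) := by
  constructor <;> intros <;>
    simp only [covOp_eq_of_eqOn_clm hs hp hAB hB, map_add, map_smul,
      (hΓ _).map_add, (hΓ _).map_smul] <;> module

theorem covOp_apply_field_of_apply_eq_zero {X : V → V} (hX : DifferentiableAt ℝ X p)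
    (hAX : ∀ q ∈ s, A q (X q) = 0) {u : V} (hΓ : Γ p u 0 = 0) :
    covOp Γ A p u (X p) = -A p (cov Γ X p u) := by
  have hzero : fderiv ℝ (fun q => B q (X q)) p u = 0 := by
    rw [fderiv_congr_of_isOpen hs hp (g := fun _ => (0 : V))
      fun q hq => by rw [← hAB q hq, hAX q hq]]
    simp
  rw [fderiv_clm_apply hB hX] at hzero
  simp only [add_apply, ContinuousLinearMap.coe_comp, Function.comp_apply,
    ContinuousLinearMap.flip_apply] at hzero
  rw [covOp_eq_of_eqOn_clm hs hp hAB hB, ← hAB p hp, hAX p hp, hΓ, cov, hAB p hp, map_add]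
  linear_combination (norm := abel) hzero

end CovOp

section Canonical

variable [FiniteDimensional ℝ V] {s : Set V} {S : ACM s} {α : ℝ} {Γ : V → V → V → V} {p : V}
  (hs : IsOpen s) (hAK : IsAK s S α) (hΓ : IsLeviCivitaOn s S.g Γ) (hp : p ∈ s)

omit [FiniteDimensional ℝ V] in
include hΓ hp in
theorem isLinearMap_canonical_right (u : V) : IsLinearMap ℝ (canonical α S Γ p u) := by
  constructor <;> intros <;>
    simp only [canonical, (hΓ.1.isLinearMap_right hp u).map_add,
      (hΓ.1.isLinearMap_right hp u).map_smul, S.g_add_right hp, S.g_smul_right hp,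
      (S.lin_eta p hp).map_add, (S.lin_eta p hp).map_smul, smul_eq_mul] <;> module

include hs hΓ hp in
theorem isLinearMap_canonical_left (v : V) : IsLinearMap ℝ (fun u => canonical α S Γ p u v) := by
  have hh := ACM.isLinearMap_hpr α hs hp (S := S)
  constructor <;> intros <;>
    simp only [canonical, (hΓ.1.isLinearMap_left hp v).map_add,
      (hΓ.1.isLinearMap_left hp v).map_smul, hh.map_add, hh.map_smul, S.g_add_left hp,
      S.g_smul_left hp, ← smul_add] <;> module

include hs hAK hΓ hp

theorem cov_canonical_xi (x : V) : cov (canonical α S Γ) S.xi p x = 0 := by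
  have h := cov_xi_eq hs hAK hΓ hp x
  simp only [cov, canonical, S.g_add_left hp, S.g_xi hp, eta_hpr hs hAK hΓ hp, add_zero,
    S.eta_xi p hp, mul_one] at h ⊢
  linear_combination (norm := module) h

theorem eta_canonical (x u : V) :
    S.eta p (canonical α S Γ p x u) = fderiv ℝ (fun q => S.eta q u) p x := by
  have hη := S.lin_eta p hp
  rw [fderiv_eta_apply hs hΓ hp, canonical, hη.map_sub, hη.map_add, hη.map_smul, hη.map_smul,
    S.eta_xi p hp, hη.map_add x, eta_hpr hs hAK hΓ hp, cov_xi_eq hs hAK hΓ hp, S.g_smul_right hp,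
    S.g_add_right hp, S.g_sub_right hp, S.g_smul_right hp, S.g_xi hp, S.g_add_left hp,
    S.g_comm hp x, S.g_comm hp (hpr α S.phi S.xi p x)]
  simp only [smul_eq_mul]
  ring

theorem torsion_canonical (u v : V) :
    torsion (canonical α S Γ) p u v
      = (α / 2) • (S.eta p u • (v + hpr α S.phi S.xi p v)
          - S.eta p v • (u + hpr α S.phi S.xi p u)) := by
  have hg : S.g p (u + hpr α S.phi S.xi p u) v = S.g p (v + hpr α S.phi S.xi p v) u := by
    rw [S.g_add_left hp, S.g_add_left hp, g_hpr_comm hs hAK hΓ hp, S.g_comm hp u,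
      S.g_comm hp u]
  rw [torsion, canonical, canonical, hΓ.2.1 p hp u v, hg]
  module

theorem fderiv_torsion_canonical (x u v : V) :
    fderiv ℝ (fun q => torsion (canonical α S Γ) q u v) p x
      = (α / 2) • (S.eta p (canonical α S Γ p x u) • (v + hpr α S.phi S.xi p v)
          + S.eta p u • fderiv ℝ (S.hprCLM α) p x v
          - S.eta p v • fderiv ℝ (S.hprCLM α) p x u
          - S.eta p (canonical α S Γ p x v) • (u + hpr α S.phi S.xi p u)) := by
  have hh := (S.contDiffOn_hprCLM α hs).differentiableAt_of_isOpen hs hp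
  have hη : ∀ w, DifferentiableAt ℝ (fun q => S.eta q w) p := fun w =>
    (S.smooth_eta w).differentiableAt_of_isOpen hs hp
  have hK : ∀ w, DifferentiableAt ℝ (fun q => w + S.hprCLM α q w) p := fun w =>
    (differentiableAt_const w).add (hh.clm_apply (differentiableAt_const w))
  have hDK : ∀ w, fderiv ℝ (fun q => w + S.hprCLM α q w) p x = fderiv ℝ (S.hprCLM α) p x w :=
    fun w => by rw [fderiv_const_add, fderiv_clm_apply_const hh]
  have hT : DifferentiableAt ℝ
      (fun q => S.eta q u • (v + S.hprCLM α q v) - S.eta q v • (u + S.hprCLM α q u)) p :=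
    ((hη u).smul (hK v)).sub ((hη v).smul (hK u))
  rw [fderiv_congr_of_isOpen hs hp (g := fun q => (α / 2) • (S.eta q u • (v + S.hprCLM α q v)
      - S.eta q v • (u + S.hprCLM α q u)))
      fun q hq => by rw [torsion_canonical hs hAK hΓ hq, ACM.hprCLM_apply α hs hq,
        ACM.hprCLM_apply α hs hq],
    fderiv_fun_const_smul hT, fderiv_fun_sub (f := fun q => _ • _) (g := fun q => _ • _)
      ((hη u).smul (hK v)) ((hη v).smul (hK u)),
    fderiv_fun_smul (hη u) (hK v), fderiv_fun_smul (hη v) (hK u)]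
  simp only [sub_apply, add_apply, smul_apply,
    ContinuousLinearMap.smulRight_apply, hDK, ← eta_canonical hs hAK hΓ hp,
    ACM.hprCLM_apply α hs hp]
  module

theorem covT2_torsion_canonical (x u v : V) :
    covT2 (canonical α S Γ) (torsion (canonical α S Γ)) p x u v
      = (α / 2) • (S.eta p u • covOp (canonical α S Γ) (hpr α S.phi S.xi) p x v
          - S.eta p v • covOp (canonical α S Γ) (hpr α S.phi S.xi) p x u) := by
  have hc := isLinearMap_canonical_right hΓ hp (α := α) x
  have hcov : ∀ w, covOp (canonical α S Γ) (hpr α S.phi S.xi) p x w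
      = fderiv ℝ (S.hprCLM α) p x w + canonical α S Γ p x (hpr α S.phi S.xi p w)
        - hpr α S.phi S.xi p (canonical α S Γ p x w) := fun w => by
    rw [covOp_eq_of_eqOn_clm hs hp (fun q hq w => (ACM.hprCLM_apply α hs hq w).symm)
      ((S.contDiffOn_hprCLM α hs).differentiableAt_of_isOpen hs hp),
      ACM.hprCLM_apply α hs hp, ACM.hprCLM_apply α hs hp]
  rw [covT2, fderiv_torsion_canonical hs hAK hΓ hp, torsion_canonical hs hAK hΓ hp,
    torsion_canonical hs hAK hΓ hp, torsion_canonical hs hAK hΓ hp, hc.map_smul, hc.map_sub,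
    hc.map_smul, hc.map_smul, hc.map_add, hc.map_add, hcov, hcov]
  module

end Canonical

def ParallelOp (s : Set V) (Γ : V → V → V → V) (A : V → V → V) : Prop :=
  ∀ p ∈ s, ∀ u v : V, covOp Γ A p u v = 0

section Equivalences

variable [FiniteDimensional ℝ V] {s : Set V} {S : ACM s} {α : ℝ} {Γ : V → V → V → V}
  (hs : IsOpen s) (hAK : IsAK s S α) (hΓ : IsLeviCivitaOn s S.g Γ)
include hs hAK hΓ

theorem covOp_canonical_hpr_xi {p : V} (hp : p ∈ s) (u : V) :
    covOp (canonical α S Γ) (hpr α S.phi S.xi) p u (S.xi p) = 0 := by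
  rw [covOp_apply_field_of_apply_eq_zero hs hp (fun q hq w => (ACM.hprCLM_apply α hs hq w).symm)
      ((S.contDiffOn_hprCLM α hs).differentiableAt_of_isOpen hs hp) (S.differentiableAt_xi hs hp)
      (fun q hq => hpr_xi hs hAK hΓ hq) (isLinearMap_canonical_right hΓ hp u).map_zero,
    cov_canonical_xi hs hAK hΓ hp, (ACM.isLinearMap_hpr α hs hp).map_zero, neg_zero]

theorem parallelTorsion_canonical_iff :
    ParallelTorsion s (canonical α S Γ) ↔ ParallelOp s (canonical α S Γ) (hpr α S.phi S.xi) := by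
  constructor
  · intro h p hp u v
    have hT := covT2_torsion_canonical hs hAK hΓ hp u (S.xi p) v
    rw [h p hp, covOp_canonical_hpr_xi hs hAK hΓ hp, S.eta_xi p hp, one_smul, smul_zero,
      sub_zero] at hT
    exact (smul_eq_zero.mp hT.symm).resolve_left (half_pos hAK.pos).ne'
  · intro h p hp x u v
    rw [covT2_torsion_canonical hs hAK hΓ hp, h p hp x v, h p hp x u]
    simp

theorem covOp_canonical_hpr {p : V} (hp : p ∈ s) (u v : V) :
    covOp (canonical α S Γ) (hpr α S.phi S.xi) p u v
      = covOp Γ (hpr α S.phi S.xi) p u v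
        + (α * S.g p (u + hpr α S.phi S.xi p u) (hpr α S.phi S.xi p v)) • S.xi p
        + (α * S.eta p v) • (hpr α S.phi S.xi p u
            + hpr α S.phi S.xi p (hpr α S.phi S.xi p u)) := by
  have hh := ACM.isLinearMap_hpr α hs hp (S := S)
  rw [covOp, covOp, canonical, canonical, eta_hpr hs hAK hΓ hp, mul_zero, zero_smul, sub_zero,
    hh.map_sub, hh.map_add, hh.map_smul, hh.map_smul, hpr_xi hs hAK hΓ hp, hh.map_add]
  module

theorem eta_covOp_hpr {p : V} (hp : p ∈ s) (u v : V) :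
    S.eta p (covOp Γ (hpr α S.phi S.xi) p u v)
      = -S.g p (hpr α S.phi S.xi p v) (cov Γ S.xi p u) := by
  have hY : DifferentiableAt ℝ (fun q => hpr α S.phi S.xi q v) p :=
    (((S.contDiffOn_hprCLM α hs).differentiableAt_of_isOpen hs hp).clm_apply
      (differentiableAt_const v)).congr_of_eventuallyEq
      (Filter.eventuallyEq_of_mem (hs.mem_nhds hp) fun _ hq => (ACM.hprCLM_apply α hs hq v).symm)
  have h := fderiv_g_apply_fields hs hΓ hp hY (S.differentiableAt_xi hs hp) u
  rw [fderiv_congr_of_isOpen hs hp (g := fun _ => (0 : ℝ))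
    fun q hq => by rw [S.g_xi hq, eta_hpr hs hAK hΓ hq]] at h
  have hcov : cov Γ (fun q => hpr α S.phi S.xi q v) p u
      = covOp Γ (hpr α S.phi S.xi) p u v + hpr α S.phi S.xi p (Γ p u v) := by
    rw [cov, covOp]
    abel
  rw [hcov, S.g_add_left hp, S.g_xi hp, S.g_xi hp, eta_hpr hs hAK hΓ hp] at h
  simp only [fderiv_fun_const, Pi.zero_apply, zero_apply] at h
  linarith

theorem covOp_canonical_hpr_of_eta_eq_zero {p : V} (hp : p ∈ s) {u v : V}
    (hu : S.eta p u = 0) (hv : S.eta p v = 0) :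
    covOp (canonical α S Γ) (hpr α S.phi S.xi) p u v
      = covOp Γ (hpr α S.phi S.xi) p u v
        - S.eta p (covOp Γ (hpr α S.phi S.xi) p u v) • S.xi p := by
  rw [covOp_canonical_hpr hs hAK hΓ hp, eta_covOp_hpr hs hAK hΓ hp, cov_xi_eq hs hAK hΓ hp, hu,
    hv, zero_smul, sub_zero, S.g_smul_right hp, S.g_comm hp (hpr α S.phi S.xi p v)]
  module

theorem covOp_canonical_hpr_xi_left {p : V} (hp : p ∈ s) (v : V) :
    covOp (canonical α S Γ) (hpr α S.phi S.xi) p (S.xi p) v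
      = covOp Γ (hpr α S.phi S.xi) p (S.xi p) v := by
  rw [covOp_canonical_hpr hs hAK hΓ hp, hpr_xi hs hAK hΓ hp, add_zero, S.g_xi_left hp,
    eta_hpr hs hAK hΓ hp, (ACM.isLinearMap_hpr α hs hp).map_zero]
  simp

theorem parallelOp_canonical_hpr_iff :
    ParallelOp s (canonical α S Γ) (hpr α S.phi S.xi)
      ↔ EtaParallelH s S α Γ ∧ XiParallelH s S α Γ := by
  constructor
  · intro h
    refine ⟨fun p hp u v w hu hv hw => ?_, fun p hp v => ?_⟩
    · have huv := h p hp u v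
      rw [covOp_canonical_hpr_of_eta_eq_zero hs hAK hΓ hp hu hv] at huv
      exact (S.sub_eta_smul_xi_eq_zero_iff hp _).mp huv w hw
    · rw [← covOp_canonical_hpr_xi_left hs hAK hΓ hp]
      exact h p hp _ v
  · rintro ⟨hη, hξ⟩ p hp
    have hB := (S.contDiffOn_hprCLM α hs).differentiableAt_of_isOpen hs hp
    have hAB : ∀ q ∈ s, ∀ w, hpr α S.phi S.xi q w = S.hprCLM α q w :=
      fun q hq w => (ACM.hprCLM_apply α hs hq w).symm
    refine S.bilinear_eq_zero_of_ker_eta_of_xi hp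
      (isLinearMap_covOp_left hs hp hAB hB (isLinearMap_canonical_left hs hΓ hp))
      (isLinearMap_covOp_right hs hp hAB hB (isLinearMap_canonical_right hΓ hp))
      (fun u v hu hv => ?_) (fun v => ?_) (covOp_canonical_hpr_xi hs hAK hΓ hp)
    · rw [covOp_canonical_hpr_of_eta_eq_zero hs hAK hΓ hp hu hv,
        S.sub_eta_smul_xi_eq_zero_iff hp]
      exact fun w hw => hη p hp u v w hu hv hw
    · rw [covOp_canonical_hpr_xi_left hs hAK hΓ hp]
      exact hξ p hp v

end Equivalences

theorem stmt_12_general (n : ℕ) (s : Set (E (2*n+1))) (hs : IsOpen s) (S : ACM s) (α : ℝ)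
    (hAK : IsAK s S α)
    (Γ : E (2*n+1) → E (2*n+1) → E (2*n+1) → E (2*n+1))
    (hΓ : IsLeviCivitaOn s S.g Γ) :
    (ParallelTorsion s (canonical α S Γ) ↔
      (∀ p ∈ s, ∀ u v : E (2*n+1),
        covOp (canonical α S Γ) (hpr α S.phi S.xi) p u v = 0)) ∧
    ((∀ p ∈ s, ∀ u v : E (2*n+1),
        covOp (canonical α S Γ) (hpr α S.phi S.xi) p u v = 0) ↔
      (EtaParallelH s S α Γ ∧ XiParallelH s S α Γ)) :=
  ⟨parallelTorsion_canonical_iff hs hAK hΓ, parallelOp_canonical_hpr_iff hs hAK hΓ⟩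

/-- for a CR-integrable almost α-Kenmotsu manifold, the following
are equivalent: `∇̃T̃ = 0`; `∇̃h' = 0`; `h'` is η-parallel and `∇_ξ h' = 0`. -/
theorem stmt_12 (n : ℕ) (s : Set (E (2*n+1))) (hs : IsOpen s) (S : ACM s) (α : ℝ)
    (hAK : IsAK s S α) (hCR : CRIntegrableOn s S)
    (Γ : E (2*n+1) → E (2*n+1) → E (2*n+1) → E (2*n+1))
    (hΓ : IsLeviCivitaOn s S.g Γ) :
    (ParallelTorsion s (canonical α S Γ) ↔
      (∀ p ∈ s, ∀ u v : E (2*n+1),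
        covOp (canonical α S Γ) (hpr α S.phi S.xi) p u v = 0)) ∧
    ((∀ p ∈ s, ∀ u v : E (2*n+1),
        covOp (canonical α S Γ) (hpr α S.phi S.xi) p u v = 0) ↔
      (EtaParallelH s S α Γ ∧ XiParallelH s S α Γ)) :=
  stmt_12_general n s hs S α hAK Γ hΓ

end AKG
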